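/- arXiv:2306.00621 — 2 statements merged into one kernel-verified Lean document; each statement's English description precedes it below -/
import Mathlib

section
/- For the impact cost function Ξ(Δ,λ) = ∫₀^{|Δ|} I(z, λ) dz with I(z,λ) = ∫₀^{z} ι(λ - u) du (for z ≥ 0), the cost function is consistent with order splitting: for all Δ₁, Δ₂ ≥ 0 with Δ = Δ₁ + Δ₂, one has Ξ(Δ, λ) = Ξ(Δ₁, λ) + Ξ(Δ₂, λ - Δ₁) + Δ₂ · I(Δ₁, λ). -/
open MeasureTheory intervalIntegral

/-- Order-splitting consistency of the impact cost function
`Ξ(Δ, λ) = ∫₀^{Δ} I(z, λ) dz` with `I(z, λ) = ∫₀^{z} ι(λ - u) du` for `z, Δ ≥ 0`: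
`Ξ(Δ₁ + Δ₂, λ) = Ξ(Δ₁, λ) + Ξ(Δ₂, λ - Δ₁) + Δ₂ · I(Δ₁, λ)`. -/
theorem impact_cost_order_splitting
    (ι : ℝ → ℝ) (hι_nonneg : ∀ x, 0 ≤ ι x) (hι_anti : Antitone ι)
    (I Ξ : ℝ → ℝ → ℝ)
    (hI : ∀ z lam, 0 ≤ z → I z lam = ∫ u in (0:ℝ)..z, ι (lam - u))
    (hΞ : ∀ Δ lam, 0 ≤ Δ → Ξ Δ lam = ∫ z in (0:ℝ)..Δ, I z lam)
    (Δ₁ Δ₂ lam : ℝ) (h₁ : 0 ≤ Δ₁) (h₂ : 0 ≤ Δ₂) :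
    Ξ (Δ₁ + Δ₂) lam = Ξ Δ₁ lam + Ξ Δ₂ (lam - Δ₁) + Δ₂ * I Δ₁ lam := by
  have hf : ∀ c a b : ℝ, IntervalIntegrable (fun u => ι (c - u)) volume a b := by
    intro c a b
    apply Monotone.intervalIntegrable
    intro x y hxy
    exact hι_anti (by linarith)
  set F : ℝ → ℝ := fun z => ∫ u in (0:ℝ)..z, ι (lam - u) with hFdef
  set G : ℝ → ℝ := fun w => ∫ v in (0:ℝ)..w, ι (lam - Δ₁ - v) with hGdef
  have hFc : Continuous F := intervalIntegral.continuous_primitive (fun a b => hf lam a b) 0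
  have hGc : Continuous G :=
    intervalIntegral.continuous_primitive (fun a b => hf (lam - Δ₁) a b) 0
  have key : ∀ w : ℝ, F (Δ₁ + w) = F Δ₁ + G w := by
    intro w
    have hadd := intervalIntegral.integral_add_adjacent_intervals
      (hf lam 0 Δ₁) (hf lam Δ₁ (Δ₁ + w))
    have h2 : G w = ∫ u in Δ₁..(Δ₁ + w), ι (lam - u) := by
      rw [hGdef]
      have := intervalIntegral.integral_comp_add_left (a := (0:ℝ)) (b := w)
        (fun u => ι (lam - u)) Δ₁
      simp only [add_zero] at this
      rw [← this]
      simp only [sub_add_eq_sub_sub]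
    rw [h2]
    exact hadd.symm
  -- convert Ξ's and inner I's to F/G form
  have hIcongr : ∀ Δ : ℝ, 0 ≤ Δ →
      (∫ z in (0:ℝ)..Δ, I z lam) = ∫ z in (0:ℝ)..Δ, F z := by
    intro Δ hΔ
    apply intervalIntegral.integral_congr
    intro z hz
    rw [Set.uIcc_of_le hΔ] at hz
    exact hI z lam hz.1
  have hIcongr' : (∫ z in (0:ℝ)..Δ₂, I z (lam - Δ₁)) = ∫ z in (0:ℝ)..Δ₂, G z := by
    apply intervalIntegral.integral_congr
    intro z hz
    rw [Set.uIcc_of_le h₂] at hz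
    exact hI z (lam - Δ₁) hz.1
  have hsplit : (∫ z in (0:ℝ)..(Δ₁ + Δ₂), F z)
      = (∫ z in (0:ℝ)..Δ₁, F z) + ∫ z in Δ₁..(Δ₁ + Δ₂), F z :=
    (intervalIntegral.integral_add_adjacent_intervals
      (hFc.intervalIntegrable 0 Δ₁) (hFc.intervalIntegrable Δ₁ (Δ₁ + Δ₂))).symm
  have hshift : (∫ z in Δ₁..(Δ₁ + Δ₂), F z) = ∫ w in (0:ℝ)..Δ₂, F (Δ₁ + w) := by
    have := intervalIntegral.integral_comp_add_left (a := (0:ℝ)) (b := Δ₂) F Δ₁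
    simp only [add_zero] at this
    rw [this]
  have hsum : (∫ w in (0:ℝ)..Δ₂, F (Δ₁ + w))
      = Δ₂ * F Δ₁ + ∫ w in (0:ℝ)..Δ₂, G w := by
    have : (∫ w in (0:ℝ)..Δ₂, F (Δ₁ + w))
        = ∫ w in (0:ℝ)..Δ₂, (F Δ₁ + G w) := by
      apply intervalIntegral.integral_congr
      intro w _
      exact key w
    rw [this, intervalIntegral.integral_add (intervalIntegrable_const)
      (hGc.intervalIntegrable 0 Δ₂)]
    simp [mul_comm]
  rw [hΞ (Δ₁ + Δ₂) lam (by linarith), hΞ Δ₁ lam h₁, hΞ Δ₂ (lam - Δ₁) h₂,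
    hIcongr (Δ₁ + Δ₂) (by linarith), hIcongr Δ₁ h₁, hIcongr', hI Δ₁ lam h₁,
    hsplit, hshift, hsum]
  ring
end

section
/- If ι is Lipschitz with constant c_ι and bounded above by ι(λ̲) on [λ̲, ∞) shifted arguments, then for all λ₁, λ₂ ≥ λ̲ and Δ₁, Δ₂ ∈ ℝ with sgn(Δ₁) = sgn(Δ₂) = 1 (i.e. Δ₁, Δ₂ ≥ 0): |I(Δ₁, λ₁) - I(Δ₂, λ₂)| ≤ c_ι · min(Δ₁, Δ₂) · |λ₁ - λ₂| + ι(λ̲ - max(Δ₁,Δ₂)) · |Δ₁ - Δ₂|; in particular this difference is bounded by c_ι min(Δ₁,Δ₂)|λ₁-λ₂| + M |Δ₁-Δ₂| whenever ι ≤ M everywhere. -/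
open MeasureTheory intervalIntegral NNReal

private lemma key_aux
    (ι : ℝ → ℝ) (hι_nonneg : ∀ x, 0 ≤ ι x) (hι_anti : Antitone ι)
    (c : ℝ≥0) (hι_lip : LipschitzWith c ι)
    (lb : ℝ) (lam₁ lam₂ Δ₁ Δ₂ : ℝ) (hlam₂ : lb ≤ lam₂)
    (h₁ : 0 ≤ Δ₁) (hle : Δ₁ ≤ Δ₂) :
    |(∫ z in (0:ℝ)..Δ₁, ι (lam₁ - z)) - ∫ z in (0:ℝ)..Δ₂, ι (lam₂ - z)| ≤
      (c : ℝ) * Δ₁ * |lam₁ - lam₂| + ι (lb - Δ₂) * |Δ₁ - Δ₂| := by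
  have hcont : Continuous ι := hι_lip.continuous
  have hint : ∀ (lam a b : ℝ), IntervalIntegrable (fun z => ι (lam - z)) volume a b :=
    fun lam a b => (hcont.comp (continuous_const.sub continuous_id)).intervalIntegrable a b
  have hsplit : (∫ z in (0:ℝ)..Δ₂, ι (lam₂ - z)) =
      (∫ z in (0:ℝ)..Δ₁, ι (lam₂ - z)) + ∫ z in Δ₁..Δ₂, ι (lam₂ - z) :=
    (integral_add_adjacent_intervals (hint _ _ _) (hint _ _ _)).symm
  have heq : (∫ z in (0:ℝ)..Δ₁, ι (lam₁ - z)) - ∫ z in (0:ℝ)..Δ₂, ι (lam₂ - z) =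
      (∫ z in (0:ℝ)..Δ₁, (ι (lam₁ - z) - ι (lam₂ - z))) - ∫ z in Δ₁..Δ₂, ι (lam₂ - z) := by
    rw [hsplit, intervalIntegral.integral_sub (hint _ _ _) (hint _ _ _)]; ring
  rw [heq]
  have hb1 : |∫ z in (0:ℝ)..Δ₁, (ι (lam₁ - z) - ι (lam₂ - z))| ≤
      ((c : ℝ) * |lam₁ - lam₂|) * |Δ₁ - 0| := by
    rw [← Real.norm_eq_abs]
    apply intervalIntegral.norm_integral_le_of_norm_le_const
    intro x _
    have := hι_lip.dist_le_mul (lam₁ - x) (lam₂ - x)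
    simpa [Real.dist_eq, sub_sub_sub_cancel_right] using this
  have hb2 : |∫ z in Δ₁..Δ₂, ι (lam₂ - z)| ≤ ι (lb - Δ₂) * |Δ₂ - Δ₁| := by
    rw [← Real.norm_eq_abs]
    apply intervalIntegral.norm_integral_le_of_norm_le_const
    intro x hx
    rw [Set.uIoc_of_le hle] at hx
    have : ι (lam₂ - x) ≤ ι (lb - Δ₂) := hι_anti (by linarith [hx.2])
    rwa [Real.norm_eq_abs, abs_of_nonneg (hι_nonneg _)]
  calc |(∫ z in (0:ℝ)..Δ₁, (ι (lam₁ - z) - ι (lam₂ - z))) - ∫ z in Δ₁..Δ₂, ι (lam₂ - z)|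
      ≤ |∫ z in (0:ℝ)..Δ₁, (ι (lam₁ - z) - ι (lam₂ - z))| + |∫ z in Δ₁..Δ₂, ι (lam₂ - z)| :=
        abs_sub _ _
    _ ≤ ((c : ℝ) * |lam₁ - lam₂|) * |Δ₁ - 0| + ι (lb - Δ₂) * |Δ₂ - Δ₁| := add_le_add hb1 hb2
    _ = (c : ℝ) * Δ₁ * |lam₁ - lam₂| + ι (lb - Δ₂) * |Δ₁ - Δ₂| := by
        rw [sub_zero, abs_of_nonneg h₁, abs_sub_comm Δ₂ Δ₁]; ring

/-- Joint Lipschitz-type estimate for the price impact of two (nonnegative) trades at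
two liquidity levels above the circuit-breaker trigger `λ̲`:
`|I(Δ₁, λ₁) - I(Δ₂, λ₂)| ≤ c_ι min(Δ₁,Δ₂)|λ₁-λ₂| + ι(λ̲ - max(Δ₁,Δ₂))|Δ₁-Δ₂|`,
and in particular the same bound with `ι(λ̲ - max(Δ₁,Δ₂))` replaced by any global
upper bound `M` of `ι`. -/
theorem price_impact_joint_lipschitz
    (ι : ℝ → ℝ) (hι_nonneg : ∀ x, 0 ≤ ι x) (hι_anti : Antitone ι)
    (c : ℝ≥0) (hι_lip : LipschitzWith c ι)
    (M : ℝ) (hιM : ∀ x, ι x ≤ M)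
    (lb : ℝ)
    (I : ℝ → ℝ → ℝ)
    (hI : ∀ Δ lam, 0 ≤ Δ → I Δ lam = ∫ z in (0:ℝ)..Δ, ι (lam - z))
    (lam₁ lam₂ Δ₁ Δ₂ : ℝ) (hlam₁ : lb ≤ lam₁) (hlam₂ : lb ≤ lam₂)
    (h₁ : 0 ≤ Δ₁) (h₂ : 0 ≤ Δ₂) :
    |I Δ₁ lam₁ - I Δ₂ lam₂| ≤
        (c : ℝ) * min Δ₁ Δ₂ * |lam₁ - lam₂| + ι (lb - max Δ₁ Δ₂) * |Δ₁ - Δ₂| ∧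
    |I Δ₁ lam₁ - I Δ₂ lam₂| ≤
        (c : ℝ) * min Δ₁ Δ₂ * |lam₁ - lam₂| + M * |Δ₁ - Δ₂| := by
  have main : |I Δ₁ lam₁ - I Δ₂ lam₂| ≤
      (c : ℝ) * min Δ₁ Δ₂ * |lam₁ - lam₂| + ι (lb - max Δ₁ Δ₂) * |Δ₁ - Δ₂| := by
    rw [hI _ _ h₁, hI _ _ h₂]
    rcases le_total Δ₁ Δ₂ with hle | hle
    · rw [min_eq_left hle, max_eq_right hle]
      exact key_aux ι hι_nonneg hι_anti c hι_lip lb lam₁ lam₂ Δ₁ Δ₂ hlam₂ h₁ hle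
    · rw [min_eq_right hle, max_eq_left hle, abs_sub_comm, abs_sub_comm Δ₁ Δ₂,
        abs_sub_comm lam₁ lam₂]
      exact key_aux ι hι_nonneg hι_anti c hι_lip lb lam₂ lam₁ Δ₂ Δ₁ hlam₁ h₂ hle
  refine ⟨main, main.trans ?_⟩
  have := mul_le_mul_of_nonneg_right (hιM (lb - max Δ₁ Δ₂)) (abs_nonneg (Δ₁ - Δ₂))
  linarith
end
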